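/- Let A be an algebra. The following are equivalent: (i) for every reflexive compatible relation R, both R ⊆ [R,R|1] and R⁻ ⊆ [R,R|1]; (ii) for every reflexive compatible relation R, Cg(R) = [R,R|1], where Cg(R) is the smallest congruence containing R. -/

import Mathlib

open FirstOrder Language

universe u

/-- A binary relation on a structure `A` is compatible (admissible) if it is preserved
by every operation (function symbol) of the language. -/
def Compatible (L : Language) {A : Type u} [L.Structure A] (R : A → A → Prop) : Prop :=
  ∀ (n : ℕ) (f : L.Functions n) (a b : Fin n → A),
    (∀ i, R (a i) (b i)) → R (Structure.funMap f a) (Structure.funMap f b)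

/-- `(x, y; z, w) ∈ M(R, S)`: there is a term `t` and tuples `a R a'`, `b S b'` with
`x = t(a,b)`, `y = t(a,b')`, `z = t(a',b)`, `w = t(a',b')`. -/
def InM (L : Language) {A : Type u} [L.Structure A] (R S : A → A → Prop)
    (x y z w : A) : Prop :=
  ∃ (n m : ℕ) (t : L.Term (Fin n ⊕ Fin m)) (a a' : Fin n → A) (b b' : Fin m → A),
    (∀ i, R (a i) (a' i)) ∧ (∀ j, S (b j) (b' j)) ∧
      x = t.realize (Sum.elim a b) ∧ y = t.realize (Sum.elim a b') ∧
      z = t.realize (Sum.elim a' b) ∧ w = t.realize (Sum.elim a' b')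

/-- `[R, S | 1]`: the transitive closure of `{(z,w) : (x,x;z,w) ∈ M(R,S) for some x}`. -/
def comm1 (L : Language) {A : Type u} [L.Structure A] (R S : A → A → Prop) :
    A → A → Prop :=
  Relation.TransGen (fun z w => ∃ x, InM L R S x x z w)

/-- Relational composition. -/
def rcomp {A : Type u} (R S : A → A → Prop) : A → A → Prop :=
  fun a c => ∃ b, R a b ∧ S b c

/-- Converse of a relation. -/
def rconv {A : Type u} (R : A → A → Prop) : A → A → Prop := fun a b => R b a

/-- Intersection of relations. -/
def rinter {A : Type u} (R S : A → A → Prop) : A → A → Prop := fun a b => R a b ∧ S a b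

/-- A congruence: a compatible equivalence relation. -/
def IsCongruence (L : Language) {A : Type u} [L.Structure A] (θ : A → A → Prop) : Prop :=
  Equivalence θ ∧ Compatible L θ

/-- A tolerance: a reflexive symmetric compatible relation. -/
def IsTolerance (L : Language) {A : Type u} [L.Structure A] (T : A → A → Prop) : Prop :=
  Reflexive T ∧ Symmetric T ∧ Compatible L T

/-- `Cg R`: the smallest congruence containing `R` (intersection of all congruences ⊇ R). -/
def Cg (L : Language) {A : Type u} [L.Structure A] (R : A → A → Prop) : A → A → Prop :=
  fun a b => ∀ θ : A → A → Prop, IsCongruence L θ → (∀ x y, R x y → θ x y) → θ a b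

/-- `R°`: the smallest tolerance containing `R`. -/
def tolC (L : Language) {A : Type u} [L.Structure A] (R : A → A → Prop) : A → A → Prop :=
  fun a b => ∀ T : A → A → Prop, IsTolerance L T → (∀ x y, R x y → T x y) → T a b

/-- `K(R,S;V) = {(z,w) : ∃ x y, (x,y;z,w) ∈ M(R,S) ∧ x V y}`. -/
def Kop (L : Language) {A : Type u} [L.Structure A] (R S V : A → A → Prop) :
    A → A → Prop :=
  fun z w => ∃ x y, InM L R S x y z w ∧ V x y

/-- The join `γ ∨ D`: the smallest congruence containing both `γ` and `D`. -/
def cgJoin (L : Language) {A : Type u} [L.Structure A] (γ D : A → A → Prop) :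
    A → A → Prop :=
  fun a b => ∀ θ : A → A → Prop, IsCongruence L θ → (∀ x y, γ x y → θ x y) →
    (∀ x y, D x y → θ x y) → θ a b

variable {L : Language} {A : Type u} [L.Structure A]

/-!
`[R,S|1]` is always a compatible preorder contained in `Cg S` (for `R` reflexive). If moreover
`R ⊆ [R,S|1]` and `R⁻ ⊆ [R,S|1]`, it is symmetric: a generator `(z,w)` comes from
`t(a,b) = t(a,b')`, `z = t(a',b)`, `w = t(a',b')`, and compatibility gives
`w = t(a',b') [R⁻] t(a,b') = t(a,b) [R] t(a',b) = z`. So `[R,R|1]` is then a congruence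
containing `R`, hence equal to `Cg R`. Conversely `Cg R` contains `R` and `R⁻`.
-/

lemma Compatible.realize_term {C : A → A → Prop} (hC : Compatible L C) {α : Type*}
    (t : L.Term α) {v v' : α → A} (h : ∀ i, C (v i) (v' i)) :
    C (t.realize v) (t.realize v') := by
  induction t with
  | var i => exact h i
  | func f ts ih => exact hC _ f _ _ fun i => ih i

lemma Compatible.transGen {G : A → A → Prop} (hrefl : Reflexive G) (hG : Compatible L G) :
    Compatible L (Relation.TransGen G) := by
  intro k f zs ws h
  have update : ∀ (v : Fin k → A) (i : Fin k),
      Relation.TransGen G (Structure.funMap f (Function.update v i (zs i)))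
        (Structure.funMap f (Function.update v i (ws i))) := fun v i =>
    Relation.TransGen.lift (fun z => Structure.funMap f (Function.update v i z))
      (fun z w hzw => hG _ f _ _ fun j => by
        rcases eq_or_ne j i with rfl | hne
        · simpa using hzw
        · simpa [Function.update_of_ne hne] using hrefl (v j))
      _ _ (h i)
  -- Change the arguments one coordinate at a time.
  have piecewise : ∀ s : Finset (Fin k),
      Relation.TransGen G (Structure.funMap f zs) (Structure.funMap f (s.piecewise ws zs)) := by
    intro s
    induction s using Finset.induction_on with
    | empty => simpa using Relation.TransGen.single (hrefl _)
    | insert i s hi ih =>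
      have step := update (s.piecewise ws zs) i
      rw [← Finset.piecewise_eq_of_notMem s ws zs hi, Function.update_eq_self] at step
      rw [Finset.piecewise_insert]
      exact ih.trans step
  simpa using piecewise Finset.univ

lemma inM_of_fintype {R S : A → A → Prop} {x y z w : A} {α β : Type*} [Fintype α] [Fintype β]
    (t : L.Term (α ⊕ β)) {a a' : α → A} {b b' : β → A}
    (ha : ∀ i, R (a i) (a' i)) (hb : ∀ j, S (b j) (b' j))
    (hx : x = t.realize (Sum.elim a b)) (hy : y = t.realize (Sum.elim a b'))
    (hz : z = t.realize (Sum.elim a' b)) (hw : w = t.realize (Sum.elim a' b')) :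
    InM L R S x y z w := by
  let e := Sum.map (Fintype.equivFin α) (Fintype.equivFin β)
  have realize_relabel : ∀ (u : α → A) (v : β → A),
      (t.relabel e).realize
          (Sum.elim (u ∘ (Fintype.equivFin α).symm) (v ∘ (Fintype.equivFin β).symm)) =
        t.realize (Sum.elim u v) := by
    intro u v
    rw [Term.realize_relabel, Sum.elim_comp_map]
    simp only [Function.comp_assoc, Equiv.symm_comp_self, Function.comp_id]
  exact ⟨_, _, t.relabel e, _, _, _, _, fun i => ha _, fun j => hb _,
    hx.trans (realize_relabel a b).symm, hy.trans (realize_relabel a b').symm,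
    hz.trans (realize_relabel a' b).symm, hw.trans (realize_relabel a' b').symm⟩

def comm1Gen (L : Language) [L.Structure A] (R S : A → A → Prop) : A → A → Prop :=
  fun z w => ∃ x, InM L R S x x z w

section Comm1

variable {R S : A → A → Prop}

lemma comm1Gen_refl (hR : Reflexive R) : Reflexive (comm1Gen L R S) := fun c =>
  ⟨c, 1, 0, Term.var (Sum.inl 0), fun _ => c, fun _ => c, finZeroElim, finZeroElim,
    fun _ => hR c, finZeroElim, rfl, rfl, rfl, rfl⟩

lemma compatible_comm1Gen : Compatible L (comm1Gen L R S) := by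
  intro k f zs ws h
  choose xs n m t a a' b b' ha hb hx hy hz hw using h
  -- The term `f(t₀, …, t_{k-1})`, each `tᵢ` on its own block of variables.
  let T : L.Term ((Σ i, Fin (n i)) ⊕ (Σ i, Fin (m i))) :=
    Term.func f fun i => (t i).relabel (Sum.map (Sigma.mk i) (Sigma.mk i))
  have realize_T : ∀ (u : ∀ i, Fin (n i) → A) (v : ∀ i, Fin (m i) → A),
      T.realize (Sum.elim (fun p => u p.1 p.2) (fun p => v p.1 p.2)) =
        Structure.funMap f fun i => (t i).realize (Sum.elim (u i) (v i)) := by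
    intro u v
    simp only [T, Term.realize, Term.realize_relabel, Sum.elim_comp_map]
    rfl
  exact ⟨Structure.funMap f xs, inM_of_fintype T (fun p => ha p.1 p.2) (fun p => hb p.1 p.2)
    (by rw [realize_T]; exact congrArg _ (funext hx))
    (by rw [realize_T]; exact congrArg _ (funext hy))
    (by rw [realize_T]; exact congrArg _ (funext hz))
    (by rw [realize_T]; exact congrArg _ (funext hw))⟩

lemma comm1_refl (hR : Reflexive R) : Reflexive (comm1 L R S) :=
  fun c => Relation.TransGen.single (comm1Gen_refl hR c)

lemma compatible_comm1 (hR : Reflexive R) : Compatible L (comm1 L R S) :=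
  compatible_comm1Gen.transGen (comm1Gen_refl hR)

lemma comm1_le_cg {a b : A} (h : comm1 L R S a b) : Cg L S a b := by
  intro θ hθ hS
  have hgen : ∀ {z w : A}, comm1Gen L R S z w → θ z w := by
    rintro z w ⟨x, n, m, t, a, a', b, b', ha, hb, hx, hy, rfl, rfl⟩
    refine hθ.2.realize_term t fun i => ?_
    cases i with
    | inl i => exact hθ.1.refl _
    | inr j => exact hS _ _ (hb j)
  induction h with
  | single h => exact hgen h
  | tail _ h ih => exact hθ.1.trans ih (hgen h)

lemma comm1_symm (hR : Reflexive R) (hle : ∀ a b, R a b → comm1 L R S a b)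
    (hle_conv : ∀ a b, rconv R a b → comm1 L R S a b) {a b : A} (h : comm1 L R S a b) :
    comm1 L R S b a := by
  have hgen : ∀ {z w : A}, comm1Gen L R S z w → comm1 L R S w z := by
    rintro z w ⟨x, n, m, t, a, a', b, b', ha, hb, hx, hy, rfl, rfl⟩
    have hw : comm1 L R S (t.realize (Sum.elim a' b')) (t.realize (Sum.elim a b')) :=
      (compatible_comm1 hR).realize_term t fun i => by
        cases i with
        | inl i => exact hle_conv _ _ (ha i)
        | inr j => exact comm1_refl hR _
    have hz : comm1 L R S (t.realize (Sum.elim a b)) (t.realize (Sum.elim a' b)) :=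
      (compatible_comm1 hR).realize_term t fun i => by
        cases i with
        | inl i => exact hle _ _ (ha i)
        | inr j => exact comm1_refl hR _
    rw [← hy, hx] at hw
    exact hw.trans hz
  induction h with
  | single h => exact hgen h
  | tail _ h ih => exact (hgen h).trans ih

lemma isCongruence_comm1 (hR : Reflexive R) (hle : ∀ a b, R a b → comm1 L R S a b)
    (hle_conv : ∀ a b, rconv R a b → comm1 L R S a b) : IsCongruence L (comm1 L R S) :=
  ⟨⟨comm1_refl hR, comm1_symm hR hle hle_conv, Relation.TransGen.trans⟩, compatible_comm1 hR⟩

end Comm1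

lemma isCongruence_cg (R : A → A → Prop) : IsCongruence L (Cg L R) :=
  ⟨⟨fun a _ hθ _ => hθ.1.refl a,
    fun h θ hθ hR => hθ.1.symm (h θ hθ hR),
    fun h h' θ hθ hR => hθ.1.trans (h θ hθ hR) (h' θ hθ hR)⟩,
    fun _ f _ _ h θ hθ hR => hθ.2 _ f _ _ fun i => h i θ hθ hR⟩

lemma le_cg {R : A → A → Prop} {a b : A} (h : R a b) : Cg L R a b :=
  fun _ _ hR => hR _ _ h

theorem stmt17 :
    (∀ R : A → A → Prop, Reflexive R → Compatible L R →
        (∀ a b, R a b → comm1 L R R a b) ∧ (∀ a b, rconv R a b → comm1 L R R a b)) ↔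
    (∀ R : A → A → Prop, Reflexive R → Compatible L R →
        ∀ a b, Cg L R a b ↔ comm1 L R R a b) := by
  constructor
  · intro H R hR hcomp a b
    obtain ⟨hle, hle_conv⟩ := H R hR hcomp
    exact ⟨fun h => h _ (isCongruence_comm1 hR hle hle_conv) hle, comm1_le_cg⟩
  · intro H R hR hcomp
    refine ⟨fun a b h => (H R hR hcomp a b).1 (le_cg h), fun a b h => ?_⟩
    exact (H R hR hcomp a b).1 ((isCongruence_cg R).1.symm (le_cg h))
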